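/- Let Q = (Q_{ij})_{i,j≥1} be a substochastic matrix on the positive integers satisfying the spectral hypothesis (with data ρ, u, v, ν, K, ε and S⁽ⁿ⁾ := Qⁿ − ρⁿ v uᵀ). For i ≥ 1 and n with (Qⁿ𝟙)_i > 0, and x = (x_1,…,x_n) ∈ {1,2,…}^n (x_0 := i), define p_i^{(n,n)}(x) := (Π_{u=1}^{n} Q_{x_{u-1}x_u}) / (Qⁿ𝟙)_i and p_i^{(n,↑)}(x) := ρ^{−n} v_i^{−1} (Π_{u=1}^{n} Q_{x_{u-1}x_u}) v_{x_n}, and set d_n^{(n)}(i) := (1/2) Σ_{x ∈ {1,2,…}^n} | p_i^{(n,n)}(x) − p_i^{(n,↑)}(x) |. Then for every i ≥ 1, lim_{n→∞} d_n^{(n)}(i) = (1/2) Σ_{j=1}^{∞} u_j |1 − v_j|. -/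

import Mathlib

open Filter Topology

/-- `n`-th power of an infinite matrix indexed by the positive integers. -/
noncomputable def matpow (Q : ℕ+ → ℕ+ → ℝ) : ℕ → ℕ+ → ℕ+ → ℝ
  | 0 => fun i j => if i = j then 1 else 0
  | n + 1 => fun i j => ∑' k : ℕ+, matpow Q n i k * Q k j

/-- `(Qⁿ𝟙)ᵢ`. -/
noncomputable def rowSum (Q : ℕ+ → ℕ+ → ℝ) (n : ℕ) (i : ℕ+) : ℝ :=
  ∑' j : ℕ+, matpow Q n i j

/-- The product `Q_{x₀x₁}Q_{x₁x₂}⋯Q_{x_{ℓ-1}x_ℓ}` along a path `x : Fin ℓ → ℕ+`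
started at `x₀ = i`. -/
noncomputable def pathProd (Q : ℕ+ → ℕ+ → ℝ) (i : ℕ+) {ℓ : ℕ} (x : Fin ℓ → ℕ+) : ℝ :=
  ∏ u : Fin ℓ,
    Q (if h : u.val = 0 then i else x ⟨u.val - 1, lt_of_le_of_lt (Nat.sub_le _ _) u.isLt⟩) (x u)

/-- The final state `x_ℓ` of a path (equal to `i` when `ℓ = 0`). -/
def lastState (i : ℕ+) {ℓ : ℕ} (x : Fin ℓ → ℕ+) : ℕ+ :=
  if h : ℓ = 0 then i else x ⟨ℓ - 1, by omega⟩

/-- `p_i^{(ℓ,n)}(x)`: the law of the first `ℓ` steps of the chain started at `i`,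
conditioned on survival up to time `n`. -/
noncomputable def condPathLaw (Q : ℕ+ → ℕ+ → ℝ) (i : ℕ+) (n : ℕ) {ℓ : ℕ}
    (x : Fin ℓ → ℕ+) : ℝ :=
  pathProd Q i x * rowSum Q (n - ℓ) (lastState i x) / rowSum Q n i

/-- `p_i^{(ℓ,↑)}(x)`: the law of the first `ℓ` steps of the `Q`-process started at `i`. -/
noncomputable def qPathLaw (Q : ℕ+ → ℕ+ → ℝ) (ρ : ℝ) (v : ℕ+ → ℝ) (i : ℕ+) {ℓ : ℕ}
    (x : Fin ℓ → ℕ+) : ℝ :=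
  (ρ ^ ℓ)⁻¹ * (v i)⁻¹ * (pathProd Q i x * v (lastState i x))

/-- `d_ℓ^{(n)}(i)`: total variation distance between the two path laws. -/
noncomputable def tvDist (Q : ℕ+ → ℕ+ → ℝ) (ρ : ℝ) (v : ℕ+ → ℝ) (i : ℕ+) (ℓ n : ℕ) : ℝ :=
  (1 / 2) * ∑' x : Fin ℓ → ℕ+, |condPathLaw Q i n x - qPathLaw Q ρ v i x|

/-- `(S⁽ⁿ⁾𝟙)ᵢ` where `S⁽ⁿ⁾ = Qⁿ - ρⁿ v uᵀ`. -/
noncomputable def Sone (Q : ℕ+ → ℕ+ → ℝ) (ρ : ℝ) (v u : ℕ+ → ℝ) (n : ℕ) (i : ℕ+) : ℝ :=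
  ∑' j : ℕ+, (matpow Q n i j - ρ ^ n * v i * u j)

/-!
Both path laws are `pathProd` times a function of the final state: `1 / (Qⁿ𝟙)ᵢ` and
`v_{xₙ} / (ρⁿ vᵢ)`. Summing over the paths that end at `j` turns `d_n^{(n)}(i)` into
`½ ∑ⱼ |pₙ(j) - qₙ(j)|` for the probability vectors `pₙ(j) = Qⁿᵢⱼ / (Qⁿ𝟙)ᵢ` and
`qₙ(j) = Qⁿᵢⱼ vⱼ / (ρⁿ vᵢ)`. The spectral bounds give `Qⁿᵢⱼ / ρⁿ → vᵢ uⱼ` and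
`(Qⁿ𝟙)ᵢ / ρⁿ → vᵢ`, hence `pₙ → u` and `qₙ → u v` pointwise, and then in `ℓ¹` by Scheffé's lemma.
-/

section Summation

variable {α β γ : Type*}

theorem HasSum.prod_of_nonneg {f : β × γ → ℝ} {g : β → ℝ} {a : ℝ} (hf : 0 ≤ f)
    (hfib : ∀ b, HasSum (fun c => f (b, c)) (g b)) (hg : HasSum g a) : HasSum f a := by
  have hs : Summable f := (summable_prod_of_nonneg hf).2
    ⟨fun b => (hfib b).summable, hg.summable.congr fun b => ((hfib b).tsum_eq).symm⟩
  convert hs.hasSum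
  rw [hs.tsum_prod' fun b => (hfib b).summable, ← hg.tsum_eq]
  exact tsum_congr fun b => ((hfib b).tsum_eq).symm

theorem HasSum.tsum_swap_of_nonneg {f : β → γ → ℝ} {a : ℝ} (hf : ∀ b c, 0 ≤ f b c)
    (hrow : ∀ b, Summable (f b)) (h : HasSum (fun b => ∑' c, f b c) a) :
    HasSum (fun c => ∑' b, f b c) a := by
  have hs : Summable (Function.uncurry f) :=
    (summable_prod_of_nonneg fun p => hf p.1 p.2).2 ⟨hrow, h.summable⟩
  rw [← h.tsum_eq, ← hs.tsum_comm]
  exact hs.prod_symm.prod.hasSum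

theorem abs_tsum_abs_sub_tsum_abs_le {a b : β → ℝ} (ha : Summable a) (hb : Summable b) :
    |(∑' j, |a j|) - (∑' j, |b j|)| ≤ ∑' j, |a j - b j| := by
  rw [← ha.abs.tsum_sub hb.abs]
  exact (norm_tsum_le_tsum_norm (ha.abs.sub hb.abs).norm).trans
    ((ha.abs.sub hb.abs).norm.tsum_le_tsum (fun j => abs_abs_sub_abs_le_abs_sub _ _)
      (ha.sub hb).abs)

/-- Scheffé's lemma for series. -/
theorem tendsto_tsum_abs_sub_zero_of_tendsto {l : Filter α} {f : α → β → ℝ} {g : β → ℝ} {s : ℝ}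
    (hg : HasSum g s) (hg0 : ∀ b, 0 ≤ g b) (hf : ∀ᶠ n in l, HasSum (f n) s)
    (hf0 : ∀ n b, 0 ≤ f n b) (hfg : ∀ b, Tendsto (f · b) l (𝓝 (g b))) :
    Tendsto (fun n => ∑' b, |f n b - g b|) l (𝓝 0) := by
  -- `|f - g| = 2 (g - f)⁺ - (g - f)`, and `(g - f)⁺ ≤ g` allows dominated convergence.
  have hdom : ∀ n b, |max (g b - f n b) 0| ≤ g b := fun n b => by
    rw [abs_of_nonneg (le_max_right _ _)]
    exact max_le (by linarith [hf0 n b]) (hg0 b)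
  have hpos : Tendsto (fun n => ∑' b, max (g b - f n b) 0) l (𝓝 0) := by
    simpa using tendsto_tsum_of_dominated_convergence hg.summable
      (fun b => (tendsto_const_nhds.sub (hfg b)).max tendsto_const_nhds)
      (Eventually.of_forall fun n b => (Real.norm_eq_abs _).trans_le (hdom n b))
  have heq : ∀ᶠ n in l, ∑' b, |f n b - g b| = 2 * ∑' b, max (g b - f n b) 0 := by
    filter_upwards [hf] with n hfn
    have hd : HasSum (fun b => g b - f n b) 0 := by simpa using hg.sub hfn
    have hmax : Summable fun b => max (g b - f n b) 0 :=
      hd.summable.abs.of_nonneg_of_le (fun _ => le_max_right _ _)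
        fun b => max_le (le_abs_self _) (abs_nonneg _)
    have hsum : HasSum (fun b => 2 * max (g b - f n b) 0 - (g b - f n b))
        (2 * ∑' b, max (g b - f n b) 0) := by
      simpa using (hmax.hasSum.mul_left 2).sub hd
    refine (tsum_congr fun b => ?_).trans hsum.tsum_eq
    have h1 := max_zero_add_max_neg_zero_eq_abs_self (g b - f n b)
    have h2 := max_zero_sub_max_neg_zero_eq_self (g b - f n b)
    rw [abs_sub_comm]
    linarith
  simpa using (hpos.const_mul 2).congr' (heq.mono fun n h => h.symm)

theorem tendsto_tsum_abs_sub_of_tendsto {l : Filter α} {f g : α → β → ℝ} {f' g' : β → ℝ}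
    {s t : ℝ} (hf' : HasSum f' s) (hg' : HasSum g' t) (hf'0 : ∀ b, 0 ≤ f' b)
    (hg'0 : ∀ b, 0 ≤ g' b) (hf : ∀ᶠ n in l, HasSum (f n) s) (hg : ∀ᶠ n in l, HasSum (g n) t)
    (hf0 : ∀ n b, 0 ≤ f n b) (hg0 : ∀ n b, 0 ≤ g n b)
    (hff' : ∀ b, Tendsto (f · b) l (𝓝 (f' b))) (hgg' : ∀ b, Tendsto (g · b) l (𝓝 (g' b))) :
    Tendsto (fun n => ∑' b, |f n b - g n b|) l (𝓝 (∑' b, |f' b - g' b|)) := by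
  have hFlim := tendsto_tsum_abs_sub_zero_of_tendsto hf' hf'0 hf hf0 hff'
  have hGlim := tendsto_tsum_abs_sub_zero_of_tendsto hg' hg'0 hg hg0 hgg'
  rw [← tendsto_sub_nhds_zero_iff]
  refine squeeze_zero_norm' ?_ (by simpa using hFlim.add hGlim)
  filter_upwards [hf, hg] with n hfn hgn
  have hF := (hfn.sub hf').summable
  have hG := (hgn.sub hg').summable
  refine (abs_tsum_abs_sub_tsum_abs_le (hfn.sub hgn).summable (hf'.sub hg').summable).trans ?_
  rw [← hF.abs.tsum_add hG.abs]
  refine (((hfn.sub hgn).sub (hf'.sub hg')).summable.abs.tsum_le_tsum (fun b => ?_)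
    (hF.abs.add hG.abs))
  calc |f n b - g n b - (f' b - g' b)| = |(f n b - f' b) - (g n b - g' b)| := by ring_nf
    _ ≤ |f n b - f' b| + |g n b - g' b| := abs_sub _ _

end Summation

theorem tendsto_div_pow_of_abs_sub_le {a : ℕ → ℝ} {ρ r b C : ℝ} (hρ : 0 < ρ) (hr0 : 0 ≤ r)
    (hr1 : r < 1) (h : ∀ᶠ n in atTop, |a n - ρ ^ n * b| ≤ C * r ^ n * ρ ^ n) :
    Tendsto (fun n => a n / ρ ^ n) atTop (𝓝 b) := by
  rw [← tendsto_sub_nhds_zero_iff]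
  refine squeeze_zero_norm' (h.mono fun n hn => ?_)
    (by simpa using (tendsto_pow_atTop_nhds_zero_of_lt_one hr0 hr1).const_mul C)
  have hρn := pow_pos hρ n
  rwa [Real.norm_eq_abs, show a n / ρ ^ n - b = (a n - ρ ^ n * b) / ρ ^ n by field_simp,
    abs_div, abs_of_pos hρn, div_le_iff₀ hρn]

theorem rowSum_zero (Q : ℕ+ → ℕ+ → ℝ) (i : ℕ+) : rowSum Q 0 i = 1 := by
  simp [rowSum, matpow]

theorem hasSum_matpow_zero_mul (Q : ℕ+ → ℕ+ → ℝ) (i : ℕ+) (g : ℕ+ → ℝ) :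
    HasSum (fun j => matpow Q 0 i j * g j) (g i) := by
  convert hasSum_ite_eq i (g i) using 1
  funext j
  by_cases h : j = i <;> simp [matpow, h, Ne.symm]

theorem pathProd_snoc (Q : ℕ+ → ℕ+ → ℝ) (i j : ℕ+) {n : ℕ} (y : Fin n → ℕ+) :
    pathProd Q i (Fin.snoc y j : Fin (n + 1) → ℕ+) = pathProd Q i y * Q (lastState i y) j := by
  rw [pathProd, pathProd, Fin.prod_univ_castSucc]
  congr 1
  · refine Finset.prod_congr rfl fun t _ => ?_
    simp [Fin.snoc, show (t : ℕ) - 1 < n by omega]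
  · rcases n with _ | n <;> simp [Fin.snoc, lastState]

theorem lastState_snoc (i j : ℕ+) {n : ℕ} (y : Fin n → ℕ+) :
    lastState i (Fin.snoc y j : Fin (n + 1) → ℕ+) = j := by
  simp [lastState, Fin.snoc]

section Substochastic

variable {Q : ℕ+ → ℕ+ → ℝ}

theorem matpow_nonneg (hQ : ∀ i j, 0 ≤ Q i j) : ∀ n i j, 0 ≤ matpow Q n i j
  | 0, i, j => by simp only [matpow]; split_ifs <;> norm_num
  | n + 1, i, j => tsum_nonneg fun k => mul_nonneg (matpow_nonneg hQ n i k) (hQ k j)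

theorem rowSum_nonneg (hQ : ∀ i j, 0 ≤ Q i j) (n : ℕ) (i : ℕ+) : 0 ≤ rowSum Q n i :=
  tsum_nonneg (matpow_nonneg hQ n i)

theorem pathProd_nonneg (hQ : ∀ i j, 0 ≤ Q i j) (i : ℕ+) {n : ℕ} (x : Fin n → ℕ+) :
    0 ≤ pathProd Q i x :=
  Finset.prod_nonneg fun _ _ => hQ _ _

theorem le_one_of_substochastic (hQ : ∀ i j, 0 ≤ Q i j) (hs : ∀ i, Summable (Q i))
    (hr : ∀ i, ∑' j, Q i j ≤ 1) (k j : ℕ+) : Q k j ≤ 1 :=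
  ((hs k).le_tsum j fun j' _ => hQ k j').trans (hr k)

theorem summable_matpow (hQ : ∀ i j, 0 ≤ Q i j) (hs : ∀ i, Summable (Q i))
    (hr : ∀ i, ∑' j, Q i j ≤ 1) (n : ℕ) (i : ℕ+) : Summable (matpow Q n i) := by
  suffices ∀ i, Summable (matpow Q n i) ∧ rowSum Q n i ≤ 1 from (this i).1
  induction n with
  | zero =>
    exact fun i => ⟨by simpa using (hasSum_matpow_zero_mul Q i 1).summable, (rowSum_zero Q i).le⟩
  | succ n ih =>
    intro i
    have hM := matpow_nonneg hQ n i
    have hbound : ∀ k, ∑' j, matpow Q n i k * Q k j ≤ matpow Q n i k := fun k => by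
      rw [tsum_mul_left]
      exact mul_le_of_le_one_right (hM k) (hr k)
    have hsum : Summable fun k => ∑' j, matpow Q n i k * Q k j :=
      (ih i).1.of_nonneg_of_le (fun k => tsum_nonneg fun j => mul_nonneg (hM k) (hQ k j)) hbound
    have h := hsum.hasSum.tsum_swap_of_nonneg (fun k j => mul_nonneg (hM k) (hQ k j))
      fun k => (hs k).mul_left _
    exact ⟨h.summable, h.tsum_eq.trans_le <| (hsum.tsum_le_tsum hbound (ih i).1).trans (ih i).2⟩

theorem hasSum_matpow_mul_eigenvector {ρ : ℝ} {v : ℕ+ → ℝ} (hQ : ∀ i j, 0 ≤ Q i j)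
    (hv : ∀ j, 0 ≤ v j) (hv_eig : ∀ i, HasSum (fun j => Q i j * v j) (ρ * v i)) (n : ℕ)
    (i : ℕ+) : HasSum (fun j => matpow Q n i j * v j) (ρ ^ n * v i) := by
  induction n generalizing i with
  | zero => simpa using hasSum_matpow_zero_mul Q i v
  | succ n ih =>
    have hM := matpow_nonneg hQ n i
    have htot : HasSum (fun k => ∑' j, matpow Q n i k * (Q k j * v j)) (ρ ^ (n + 1) * v i) := by
      simp only [tsum_mul_left, fun k => (hv_eig k).tsum_eq, pow_succ', mul_assoc]
      simpa only [mul_left_comm ρ] using (ih i).mul_left ρ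
    have h := htot.tsum_swap_of_nonneg (fun k j => mul_nonneg (hM k) (mul_nonneg (hQ k j) (hv j)))
      fun k => ((hv_eig k).mul_left _).summable
    simp only [← mul_assoc, tsum_mul_right] at h
    exact h

theorem hasSum_pathProd_mul_lastState (hQ : ∀ i j, 0 ≤ Q i j) (hs : ∀ i, Summable (Q i))
    (hr : ∀ i, ∑' j, Q i j ≤ 1) (i : ℕ+) (n : ℕ) {g : ℕ+ → ℝ} {a : ℝ} (hg : ∀ j, 0 ≤ g j)
    (h : HasSum (fun j => matpow Q n i j * g j) a) :
    HasSum (fun x : Fin n → ℕ+ => pathProd Q i x * g (lastState i x)) a := by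
  induction n generalizing g a with
  | zero =>
    rw [(hasSum_matpow_zero_mul Q i g).unique h |>.symm]
    simp [pathProd, lastState]
  | succ n ih =>
    rw [← (Fin.snocEquiv fun _ => ℕ+).hasSum_iff]
    refine HasSum.prod_of_nonneg (fun p => ?_) (fun j => ?_) h
    · exact mul_nonneg (pathProd_nonneg hQ i _) (hg _)
    · have hstep : HasSum (fun k => matpow Q n i k * Q k j) (matpow Q (n + 1) i j) :=
        ((summable_matpow hQ hs hr n i).of_nonneg_of_le
          (fun k => mul_nonneg (matpow_nonneg hQ n i k) (hQ k j))
          fun k => mul_le_of_le_one_right (matpow_nonneg hQ n i k)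
            (le_one_of_substochastic hQ hs hr k j)).hasSum
      simpa [Fin.snocEquiv, pathProd_snoc, lastState_snoc, mul_assoc] using
        ((ih (fun k => hQ k j) hstep).mul_right (g j))

theorem Sone_eq_rowSum_sub (hQ : ∀ i j, 0 ≤ Q i j) (hs : ∀ i, Summable (Q i))
    (hr : ∀ i, ∑' j, Q i j ≤ 1) {ρ : ℝ} {u : ℕ+ → ℝ} (hu : Summable u) (v : ℕ+ → ℝ) (n : ℕ)
    (i : ℕ+) : Sone Q ρ v u n i = rowSum Q n i - ρ ^ n * v i * ∑' j, u j := by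
  rw [Sone, (summable_matpow hQ hs hr n i).tsum_sub (hu.mul_left _), tsum_mul_left, rowSum]

end Substochastic

/-- The laws of the state at time `n` under `condPathLaw Q i n` and `qPathLaw Q ρ v i`,
for paths of length `n`. -/
noncomputable def condMarginal (Q : ℕ+ → ℕ+ → ℝ) (i : ℕ+) (n : ℕ) (j : ℕ+) : ℝ :=
  matpow Q n i j / rowSum Q n i

noncomputable def qMarginal (Q : ℕ+ → ℕ+ → ℝ) (ρ : ℝ) (v : ℕ+ → ℝ) (i : ℕ+) (n : ℕ)
    (j : ℕ+) : ℝ :=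
  matpow Q n i j * v j / (ρ ^ n * v i)

section Marginals

variable {Q : ℕ+ → ℕ+ → ℝ} {ρ : ℝ} {u v : ℕ+ → ℝ} {i : ℕ+}

theorem condMarginal_nonneg (hQ : ∀ i j, 0 ≤ Q i j) (n : ℕ) (j : ℕ+) :
    0 ≤ condMarginal Q i n j :=
  div_nonneg (matpow_nonneg hQ n i j) (rowSum_nonneg hQ n i)

theorem qMarginal_nonneg (hQ : ∀ i j, 0 ≤ Q i j) (hρ : 0 ≤ ρ) (hv : ∀ j, 0 ≤ v j) (n : ℕ)
    (j : ℕ+) : 0 ≤ qMarginal Q ρ v i n j :=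
  div_nonneg (mul_nonneg (matpow_nonneg hQ n i j) (hv j)) (mul_nonneg (pow_nonneg hρ n) (hv i))

theorem hasSum_condMarginal (hQ : ∀ i j, 0 ≤ Q i j) (hs : ∀ i, Summable (Q i))
    (hr : ∀ i, ∑' j, Q i j ≤ 1) {n : ℕ} (h : rowSum Q n i ≠ 0) :
    HasSum (condMarginal Q i n) 1 := by
  have hsum := (summable_matpow hQ hs hr n i).hasSum.div_const (rowSum Q n i)
  rwa [show ∑' j, matpow Q n i j = rowSum Q n i from rfl, div_self h] at hsum

theorem hasSum_qMarginal (hQ : ∀ i j, 0 ≤ Q i j) (hv : ∀ j, 0 ≤ v j)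
    (hv_eig : ∀ i, HasSum (fun j => Q i j * v j) (ρ * v i)) (hρ : ρ ≠ 0) (hvi : v i ≠ 0)
    (n : ℕ) : HasSum (qMarginal Q ρ v i n) 1 := by
  have hsum := (hasSum_matpow_mul_eigenvector hQ hv hv_eig n i).div_const (ρ ^ n * v i)
  rwa [div_self (mul_ne_zero (pow_ne_zero n hρ) hvi)] at hsum

theorem tendsto_condMarginal (hρ : ρ ≠ 0) (hvi : v i ≠ 0) {j : ℕ+}
    (hM : Tendsto (fun n => matpow Q n i j / ρ ^ n) atTop (𝓝 (v i * u j)))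
    (hr : Tendsto (fun n => rowSum Q n i / ρ ^ n) atTop (𝓝 (v i))) :
    Tendsto (condMarginal Q i · j) atTop (𝓝 (u j)) := by
  have h := hM.div hr hvi
  rw [mul_div_cancel_left₀ _ hvi] at h
  exact h.congr fun n => div_div_div_cancel_right₀ (pow_ne_zero n hρ) _ _

theorem tendsto_qMarginal (hvi : v i ≠ 0) {j : ℕ+}
    (hM : Tendsto (fun n => matpow Q n i j / ρ ^ n) atTop (𝓝 (v i * u j))) :
    Tendsto (qMarginal Q ρ v i · j) atTop (𝓝 (u j * v j)) := by
  have h := hM.mul_const (v j / v i)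
  rw [show v i * u j * (v j / v i) = u j * v j by field_simp] at h
  exact h.congr fun n => by rw [qMarginal, div_mul_div_comm, mul_comm (ρ ^ n)]

theorem tvDist_self_eq_tsum_abs_sub_marginal (hQ : ∀ i j, 0 ≤ Q i j) (hs : ∀ i, Summable (Q i))
    (hr : ∀ i, ∑' j, Q i j ≤ 1) (hv : ∀ j, 0 ≤ v j)
    (hv_eig : ∀ i, HasSum (fun j => Q i j * v j) (ρ * v i)) (n : ℕ) :
    tvDist Q ρ v i n n = 1 / 2 * ∑' j, |condMarginal Q i n j - qMarginal Q ρ v i n j| := by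
  set c : ℕ+ → ℝ := fun j => (rowSum Q n i)⁻¹ - (ρ ^ n * v i)⁻¹ * v j
  have hpath (x : Fin n → ℕ+) :
      |condPathLaw Q i n x - qPathLaw Q ρ v i x| = pathProd Q i x * |c (lastState i x)| := by
    rw [← abs_of_nonneg (pathProd_nonneg hQ i x), ← abs_mul]
    simp only [condPathLaw, qPathLaw, Nat.sub_self, rowSum_zero, c]
    ring_nf
  have hmarg (j : ℕ+) :
      |condMarginal Q i n j - qMarginal Q ρ v i n j| = matpow Q n i j * |c j| := by
    rw [← abs_of_nonneg (matpow_nonneg hQ n i j), ← abs_mul]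
    simp only [condMarginal, qMarginal, c]
    ring_nf
  have hsum : Summable fun j => |condMarginal Q i n j - qMarginal Q ρ v i n j| :=
    (((summable_matpow hQ hs hr n i).div_const _).sub
      ((hasSum_matpow_mul_eigenvector hQ hv hv_eig n i).summable.div_const _)).abs
  rw [tvDist, tsum_congr hpath, tsum_congr hmarg, (hasSum_pathProd_mul_lastState hQ hs hr i n
    (fun j => abs_nonneg (c j)) (hsum.congr hmarg).hasSum).tsum_eq]

end Marginals

theorem tvDist_full_horizon_tendsto_general
    (Q : ℕ+ → ℕ+ → ℝ)
    (hQ_nonneg : ∀ i j, 0 ≤ Q i j)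
    (hQ_summ : ∀ i, Summable (fun j => Q i j))
    (hQ_row : ∀ i, ∑' j, Q i j ≤ 1)
    (ρ : ℝ) (hρ : ρ ∈ Set.Ioo (0 : ℝ) 1)
    (u v : ℕ+ → ℝ) (hu_pos : ∀ j, 0 < u j) (hv_pos : ∀ j, 0 < v j)
    (hv_eig : ∀ i, HasSum (fun j : ℕ+ => Q i j * v j) (ρ * v i))
    (hu_sum : HasSum u 1) (huv_sum : HasSum (fun j => u j * v j) 1)
    (ν : ℕ)
    (K ε : ℝ) (hε : ε ∈ Set.Ioo (0 : ℝ) 1)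
    (hS_entry : ∀ n, 1 ≤ n → ∀ i j : ℕ+,
      |matpow Q n i j - ρ ^ n * v i * u j| ≤ ((i : ℝ) ^ ν / (j : ℝ) ^ ν) * K * (1 - ε) ^ n * ρ ^ n)
    (hS_row : ∀ n, 1 ≤ n → ∀ i : ℕ+,
      |Sone Q ρ v u n i| ≤ (i : ℝ) ^ ν * K * (1 - ε) ^ n * ρ ^ n) :
    ∀ i : ℕ+,
      Tendsto (fun n : ℕ => tvDist Q ρ v i n n) atTop
        (𝓝 ((1 / 2) * ∑' j : ℕ+, u j * |1 - v j|)) := by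
  intro i
  obtain ⟨hρ0, -⟩ := hρ
  have h1ε : 0 ≤ 1 - ε ∧ 1 - ε < 1 := ⟨by linarith [hε.2], by linarith [hε.1]⟩
  have hv : ∀ j, 0 ≤ v j := fun j => (hv_pos j).le
  have hvi := (hv_pos i).ne'
  have hr : Tendsto (fun n => rowSum Q n i / ρ ^ n) atTop (𝓝 (v i)) :=
    tendsto_div_pow_of_abs_sub_le hρ0 h1ε.1 h1ε.2 <| eventually_atTop.2 ⟨1, fun n hn => by
      simpa [Sone_eq_rowSum_sub hQ_nonneg hQ_summ hQ_row hu_sum.summable, hu_sum.tsum_eq]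
        using hS_row n hn i⟩
  have hM (j : ℕ+) : Tendsto (fun n => matpow Q n i j / ρ ^ n) atTop (𝓝 (v i * u j)) :=
    tendsto_div_pow_of_abs_sub_le (C := (i : ℝ) ^ ν / (j : ℝ) ^ ν * K) hρ0 h1ε.1 h1ε.2 <|
      eventually_atTop.2 ⟨1, fun n hn => by rw [← mul_assoc]; exact hS_entry n hn i j⟩
  have hr0 : ∀ᶠ n in atTop, rowSum Q n i ≠ 0 :=
    (hr.eventually_ne hvi).mono fun n h h0 => h (by rw [h0, zero_div])
  have hlim := tendsto_tsum_abs_sub_of_tendsto hu_sum huv_sum (fun j => (hu_pos j).le)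
    (fun j => (mul_pos (hu_pos j) (hv_pos j)).le)
    (hr0.mono fun n => hasSum_condMarginal hQ_nonneg hQ_summ hQ_row)
    (Eventually.of_forall (hasSum_qMarginal hQ_nonneg hv hv_eig hρ0.ne' hvi))
    (condMarginal_nonneg hQ_nonneg) (qMarginal_nonneg hQ_nonneg hρ0.le hv)
    (fun j => tendsto_condMarginal hρ0.ne' hvi (hM j) hr) (fun j => tendsto_qMarginal hvi (hM j))
  have hlimit : ∑' j, u j * |1 - v j| = ∑' j, |u j - u j * v j| :=
    tsum_congr fun j => by rw [← mul_one_sub, abs_mul, abs_of_pos (hu_pos j)]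
  rw [hlimit]
  exact (hlim.const_mul (1 / 2)).congr fun n =>
    (tvDist_self_eq_tsum_abs_sub_marginal hQ_nonneg hQ_summ hQ_row hv hv_eig n).symm

/-- Under the spectral hypothesis,
`d_n^{(n)}(i) → (1/2) ∑_j u_j |1 - v_j|` as `n → ∞`. -/
theorem tvDist_full_horizon_tendsto
    (Q : ℕ+ → ℕ+ → ℝ)
    (hQ_nonneg : ∀ i j, 0 ≤ Q i j)
    (hQ_summ : ∀ i, Summable (fun j => Q i j))
    (hQ_row : ∀ i, ∑' j, Q i j ≤ 1)
    (ρ : ℝ) (hρ : ρ ∈ Set.Ioo (0 : ℝ) 1)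
    (u v : ℕ+ → ℝ) (hu_pos : ∀ j, 0 < u j) (hv_pos : ∀ j, 0 < v j)
    (hu_eig : ∀ j, HasSum (fun i : ℕ+ => u i * Q i j) (ρ * u j))
    (hv_eig : ∀ i, HasSum (fun j : ℕ+ => Q i j * v j) (ρ * v i))
    (hu_sum : HasSum u 1) (huv_sum : HasSum (fun j => u j * v j) 1)
    (ν : ℕ) (hν : 1 ≤ ν)
    (hu_mom : Summable (fun j : ℕ+ => (j : ℝ) ^ ν * u j))
    (hv_bdd : ∃ M : ℝ, ∀ j : ℕ+, v j / (j : ℝ) ^ ν ≤ M)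
    (K ε : ℝ) (hε : ε ∈ Set.Ioo (0 : ℝ) 1)
    (hS_entry : ∀ n, 1 ≤ n → ∀ i j : ℕ+,
      |matpow Q n i j - ρ ^ n * v i * u j| ≤ ((i : ℝ) ^ ν / (j : ℝ) ^ ν) * K * (1 - ε) ^ n * ρ ^ n)
    (hS_row : ∀ n, 1 ≤ n → ∀ i : ℕ+,
      |Sone Q ρ v u n i| ≤ (i : ℝ) ^ ν * K * (1 - ε) ^ n * ρ ^ n) :
    ∀ i : ℕ+,
      Tendsto (fun n : ℕ => tvDist Q ρ v i n n) atTop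
        (𝓝 ((1 / 2) * ∑' j : ℕ+, u j * |1 - v j|)) :=
  tvDist_full_horizon_tendsto_general Q hQ_nonneg hQ_summ hQ_row ρ hρ u v hu_pos hv_pos hv_eig
    hu_sum huv_sum ν K ε hε hS_entry hS_row
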